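/- Let k be a field and let R be a commutative k-algebra with an ℕ-grading R = ⊕_{i ≥ 0} R_[i] making R a graded k-algebra (so the image of k lies in R_[0]). Assume R is local with maximal ideal 𝔪 = ⊕_{i ≥ 1} R_[i] (the irrelevant ideal). Then the zero ideal of R is arc-closed: the only element of R annihilated by every based arc is 0. -/

import Mathlib

/-!
The Rees arc `f ↦ ∑ᵢ fᵢ tⁱ` sends `R` into `R⟦t⟧`, where `fᵢ` is the degree-`i` component of `f`.
It is a `k`-algebra map because the grading is multiplicative, it is based exactly because the
maximal ideal is the irrelevant ideal, and it is injective because `f` is the sum of its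
components. An injective based arc kills only `0`.
-/

open PowerSeries

universe u

/-- A "based arc" on a local `k`-algebra `R` with coefficients in a commutative `k`-algebra `S`
is a `k`-algebra homomorphism `φ : R → S[[t]]` with `φ(𝔪) ⊆ (t)`.  The *arc closure* `𝔞^ac` of
an ideal `𝔞 ⊆ 𝔪` is the set of `f ∈ R` killed by every based arc that kills `𝔞`. -/
def arcClosure (k R : Type u) [Field k] [CommRing R] [Algebra k R] [IsLocalRing R]
    (𝔞 : Ideal R) : Set R :=
  {f | ∀ (S : Type u) [CommRing S] [Algebra k S] (φ : R →ₐ[k] PowerSeries S),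
    (∀ m ∈ IsLocalRing.maximalIdeal R, constantCoeff (φ m) = 0) →
    (∀ a ∈ 𝔞, φ a = 0) → φ f = 0}

open DirectSum

theorem zero_mem_arcClosure {k R : Type u} [Field k] [CommRing R] [Algebra k R] [IsLocalRing R]
    (𝔞 : Ideal R) : (0 : R) ∈ arcClosure k R 𝔞 :=
  fun _ _ _ φ _ _ => map_zero φ

theorem arcClosure_bot_eq_of_injective {k R : Type u} [Field k] [CommRing R] [Algebra k R]
    [IsLocalRing R] {S : Type u} [CommRing S] [Algebra k S] (φ : R →ₐ[k] S⟦X⟧)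
    (hφ : ∀ m ∈ IsLocalRing.maximalIdeal R, constantCoeff (φ m) = 0)
    (hinj : Function.Injective φ) :
    arcClosure k R ⊥ = {0} := by
  refine Set.eq_singleton_iff_unique_mem.mpr ⟨zero_mem_arcClosure ⊥, fun f hf => hinj ?_⟩
  rw [hf S φ hφ fun a ha => by rw [Ideal.mem_bot.mp ha, map_zero], map_zero]

section ReesArc

variable {k R : Type*} [CommSemiring k] [CommSemiring R] [Algebra k R]
  (𝒜 : ℕ → Submodule k R) [GradedAlgebra 𝒜]

noncomputable def reesArc : R →ₐ[k] R⟦X⟧ :=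
  (toAlgebra k (fun i => 𝒜 i) (fun i => (monomial i).restrictScalars k ∘ₗ (𝒜 i).subtype)
    (by simp) fun ai aj => by simp [monomial_mul_monomial, SetLike.coe_gMul]).comp
    (decomposeAlgEquiv 𝒜).toAlgHom

theorem reesArc_of_mem {i : ℕ} {a : R} (ha : a ∈ 𝒜 i) : reesArc 𝒜 a = monomial i a := by
  simp only [reesArc, toAlgebra, AlgHom.coe_comp, AlgHom.coe_mk, RingHom.mk_coe,
    Function.comp_apply, AlgEquiv.coe_toAlgHom, decomposeAlgEquiv_apply, decompose_of_mem 𝒜 ha]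
  exact toSemiring_of _ _ _ _ _

theorem coeff_reesArc (f : R) (n : ℕ) : coeff n (reesArc 𝒜 f) = decompose 𝒜 f n := by
  induction f using DirectSum.Decomposition.inductionOn 𝒜 with
  | zero => simp
  | homogeneous a =>
    rw [reesArc_of_mem 𝒜 a.2, coeff_monomial]
    split_ifs with h
    · rw [h, decompose_of_mem_same 𝒜 a.2]
    · rw [decompose_of_mem_ne 𝒜 a.2 (Ne.symm h)]
  | add a b ha hb => simp [ha, hb]

theorem reesArc_injective : Function.Injective (reesArc 𝒜) := by
  intro f g h
  refine (decompose 𝒜).injective (DFinsupp.ext fun n => Subtype.ext ?_)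
  rw [← coeff_reesArc, ← coeff_reesArc, h]

theorem constantCoeff_reesArc_eq_zero_iff (f : R) :
    constantCoeff (reesArc 𝒜 f) = 0 ↔ f ∈ HomogeneousIdeal.irrelevant 𝒜 := by
  rw [HomogeneousIdeal.mem_irrelevant_iff, GradedRing.proj_apply,
    ← coeff_zero_eq_constantCoeff_apply, coeff_reesArc]

end ReesArc

/-- If `R` is an ℕ-graded `k`-algebra which is local with maximal ideal the irrelevant ideal
`⊕_{i ≥ 1} R_[i]`, then the zero ideal of `R` is arc-closed: the only element of `R`
annihilated by every based arc is `0`. -/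
theorem arcClosure_bot_of_graded (k R : Type u) [Field k] [CommRing R] [Algebra k R]
    [IsLocalRing R] (𝒜 : ℕ → Submodule k R) [GradedAlgebra 𝒜]
    (hmax : IsLocalRing.maximalIdeal R = (HomogeneousIdeal.irrelevant 𝒜).toIdeal) :
    arcClosure k R ⊥ = {0} :=
  arcClosure_bot_eq_of_injective (reesArc 𝒜)
    (fun m hm => (constantCoeff_reesArc_eq_zero_iff 𝒜 m).mpr (by rwa [hmax] at hm))
    (reesArc_injective 𝒜)
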